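/- Let μ be the Gaussian measure N(m, s²) on ℝ with s > 0, η ∈ [0,1), and α ∈ [0,1] with (1-α)/(1-η) ≤ 1. Let I be the central interval [m - z·s, m + z·s] where z is chosen so that μ(I) = (1-α)/(1-η). Then for any measurable set R ⊆ ℝ satisfying (1-η)·μ(R) ≥ 1 - α, the Lebesgue measure of R is at least the Lebesgue measure (length) of I. -/

import Mathlib

/-!
The Gaussian density is a decreasing function of `|x - m|`, so the central interval `I` is a
superlevel set of it: the density is at least `c` on `I` and at most `c` off `I`, where `c` is its
value at the endpoints. If `R` carries at least as much Gaussian mass as `I`, then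
`μ (I \ R) ≤ μ (R \ I)`, and comparing with `c · volume` on both sides gives
`volume (I \ R) ≤ volume (R \ I)`.
-/

open MeasureTheory ProbabilityTheory Metric
open scoped NNReal ENNReal

namespace MeasureTheory

variable {α : Type*} [MeasurableSpace α] {μ : Measure α} {f : α → ℝ≥0∞} {I R : Set α}
  {c : ℝ≥0∞}

theorem measure_le_of_withDensity_le_of_superlevel (hI : MeasurableSet I) (hR : MeasurableSet R)
    (hc0 : c ≠ 0) (hc : c ≠ ∞) (hf_ge : ∀ x ∈ I, c ≤ f x) (hf_le : ∀ x ∉ I, f x ≤ c)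
    (hI_fin : μ.withDensity f I ≠ ∞) (hmass : μ.withDensity f I ≤ μ.withDensity f R) :
    μ I ≤ μ R := by
  set ν := μ.withDensity f
  have hν_diff : ν (I \ R) ≤ ν (R \ I) := by
    rw [← measure_inter_add_sdiff I hR, ← measure_inter_add_sdiff R hI, Set.inter_comm] at hmass
    exact ENNReal.le_of_add_le_add_left
      (ne_top_of_le_ne_top hI_fin (measure_mono Set.inter_subset_right)) hmass
  have hIR : c * μ (I \ R) ≤ ν (I \ R) := by
    rw [withDensity_apply _ (hI.diff hR), ← setLIntegral_const]
    exact setLIntegral_mono' (hI.diff hR) fun x hx => hf_ge x hx.1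
  have hRI : ν (R \ I) ≤ c * μ (R \ I) := by
    rw [withDensity_apply _ (hR.diff hI), ← setLIntegral_const]
    exact setLIntegral_mono' (hR.diff hI) fun x hx => hf_le x hx.2
  have hμ_diff : μ (I \ R) ≤ μ (R \ I) :=
    (ENNReal.mul_le_mul_iff_right hc0 hc).1 (hIR.trans (hν_diff.trans hRI))
  calc μ I = μ (I ∩ R) + μ (I \ R) := (measure_inter_add_sdiff I hR).symm
    _ ≤ μ (R ∩ I) + μ (R \ I) := by rw [Set.inter_comm]; gcongr
    _ = μ R := measure_inter_add_sdiff R hI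

end MeasureTheory

namespace ProbabilityTheory

theorem gaussianPDF_le_of_sq_sub_le (m : ℝ) (v : ℝ≥0) {x y : ℝ}
    (h : (x - m) ^ 2 ≤ (y - m) ^ 2) : gaussianPDF m v y ≤ gaussianPDF m v x := by
  refine ENNReal.ofReal_le_ofReal ?_
  rcases eq_or_ne v 0 with rfl | hv
  · simp [gaussianPDFReal_zero_var]
  unfold gaussianPDFReal
  gcongr

theorem volume_closedBall_le_of_gaussianReal_le {m : ℝ} {v : ℝ≥0} (hv : v ≠ 0) {r : ℝ}
    {R : Set ℝ} (hR : MeasurableSet R)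
    (hmass : gaussianReal m v (closedBall m r) ≤ gaussianReal m v R) :
    volume (closedBall m r) ≤ volume R := by
  rcases lt_or_ge r 0 with hr | hr
  · simp [closedBall_eq_empty.2 hr]
  rw [gaussianReal_of_var_ne_zero m hv] at hmass
  have hdist : ∀ x, (x - m) ^ 2 ≤ (m + r - m) ^ 2 ↔ x ∈ closedBall m r := fun x => by
    rw [add_sub_cancel_left, sq_le_sq, abs_of_nonneg hr, mem_closedBall, Real.dist_eq]
  refine measure_le_of_withDensity_le_of_superlevel measurableSet_closedBall hR
    (c := gaussianPDF m v (m + r)) ?_ ENNReal.ofReal_ne_top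
    (fun x hx => gaussianPDF_le_of_sq_sub_le m v ((hdist x).2 hx))
    (fun x hx => gaussianPDF_le_of_sq_sub_le m v (le_of_not_ge (mt (hdist x).1 hx)))
    ?_ hmass
  · exact (ENNReal.ofReal_pos.2 (gaussianPDFReal_pos m v _ hv)).ne'
  · rw [← gaussianReal_of_var_ne_zero m hv]
    exact measure_ne_top _ _

end ProbabilityTheory

theorem stmt7_general (m s η α z : ℝ) (hs : 0 < s) (hη1 : η < 1)
    (hz : ((gaussianReal m ⟨s ^ 2, sq_nonneg s⟩)
        (Set.Icc (m - z * s) (m + z * s))).toReal = (1 - α) / (1 - η)) :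
    ∀ R : Set ℝ, MeasurableSet R →
      1 - α ≤ (1 - η) * ((gaussianReal m ⟨s ^ 2, sq_nonneg s⟩) R).toReal →
      volume (Set.Icc (m - z * s) (m + z * s)) ≤ volume R := by
  intro R hR hRmass
  set v : ℝ≥0 := ⟨s ^ 2, sq_nonneg s⟩
  have hv : v ≠ 0 := fun h => (pow_pos hs 2).ne' (congrArg NNReal.toReal h)
  rw [← Real.closedBall_eq_Icc] at hz ⊢
  refine volume_closedBall_le_of_gaussianReal_le hv hR ?_
  rw [← ENNReal.toReal_le_toReal (measure_ne_top _ _) (measure_ne_top _ _), hz,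
    div_le_iff₀ (sub_pos.2 hη1), mul_comm]
  exact hRmass

/-- Among measurable sets `R` with `(1-η)·μ(R) ≥ 1-α` (μ Gaussian `N(m,s²)`),
the central interval with Gaussian mass `(1-α)/(1-η)` has minimal Lebesgue measure. -/
theorem stmt7 (m s η α z : ℝ) (hs : 0 < s) (hη0 : 0 ≤ η) (hη1 : η < 1)
    (hα : α ∈ Set.Icc (0:ℝ) 1) (hratio : (1 - α) / (1 - η) ≤ 1)
    (hz : ((gaussianReal m ⟨s ^ 2, sq_nonneg s⟩)
        (Set.Icc (m - z * s) (m + z * s))).toReal = (1 - α) / (1 - η)) :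
    ∀ R : Set ℝ, MeasurableSet R →
      1 - α ≤ (1 - η) * ((gaussianReal m ⟨s ^ 2, sq_nonneg s⟩) R).toReal →
      volume (Set.Icc (m - z * s) (m + z * s)) ≤ volume R :=
  stmt7_general m s η α z hs hη1 hz
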